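/- Let D be a tight multipartite tournament whose maximum anti-{1,2}-competing sets have size exactly two. Then the complement of the (1,2)-step competition graph C_{1,2}(D) is one of the following: (A) a star graph together with possibly some isolated vertices; (B) a double-star graph together with possibly some isolated vertices; (C) a disjoint union of at least two star graphs together with possibly some isolated vertices; (D) a caterpillar having at least one vertex of degree 2 together with possibly some isolated vertices. -/

import Mathlib

/-- Adjacency in the (1,2)-step competition graph `C_{1,2}(D)` of the (simple) digraph `D`
with arc relation `A`: there is a vertex `w` distinct from `u` and `v` such that either
(`d_{D-v}(u,w) ≤ 1` and `d_{D-u}(v,w) ≤ 2`) or (`d_{D-u}(v,w) ≤ 1` and `d_{D-v}(u,w) ≤ 2`). -/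
def CompAdj {V : Type*} (A : V → V → Prop) (u v : V) : Prop :=
  u ≠ v ∧ ∃ w, w ≠ u ∧ w ≠ v ∧
    ((A u w ∧ (A v w ∨ ∃ z, z ≠ u ∧ A v z ∧ A z w)) ∨
     (A v w ∧ (A u w ∨ ∃ z, z ≠ v ∧ A u z ∧ A z w)))

/-- The (1,2)-step competition graph `C_{1,2}(D)` of the digraph with arc relation `A`. -/
def compGraph {V : Type*} (A : V → V → Prop) : SimpleGraph V where
  Adj := CompAdj A
  symm := by
    constructor
    rintro u v ⟨hne, w, h1, h2, h3⟩
    exact ⟨hne.symm, w, h2, h1, h3.symm⟩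
  loopless := by constructor; rintro u ⟨hne, -⟩; exact hne rfl

/-- Vertices `u` and `v` `(1,2)`-compete in the digraph with arc relation `A`: there is a
vertex `w` distinct from `u` and `v` such that either (`u → w` and there is a directed path
of length 2 from `v` to `w` not traversing `u`) or vice versa. -/
def OneTwoCompete {V : Type*} (A : V → V → Prop) (u v : V) : Prop :=
  ∃ w, w ≠ u ∧ w ≠ v ∧
    ((A u w ∧ ∃ z, z ≠ u ∧ A v z ∧ A z w) ∨
     (A v w ∧ ∃ z, z ≠ v ∧ A u z ∧ A z w))

/-- `A` is an orientation of the complete multipartite graph whose parts are the fibres of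
`p : V → ι`: no arcs within a part, and exactly one arc between any two vertices in
different parts. -/
def IsCompleteMultipartiteOrientation {V ι : Type*} (A : V → V → Prop) (p : V → ι) : Prop :=
  (∀ u v : V, p u = p v → ¬ A u v) ∧
  ∀ u v : V, p u ≠ p v → (A u v ∨ A v u) ∧ ¬ (A u v ∧ A v u)

/-- A multipartite tournament: an orientation of a complete `k`-partite graph with `k ≥ 3`,
whose partite sets are the (nonempty) fibres of `p : V → ι`. -/
def IsMultipartiteTournament {V ι : Type*} [Fintype ι] (A : V → V → Prop) (p : V → ι) : Prop :=
  Function.Surjective p ∧ 3 ≤ Fintype.card ι ∧ IsCompleteMultipartiteOrientation A p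

/-- A multipartite tournament is tight if every partite set is a clique in `C_{1,2}(D)`. -/
def IsTight {V ι : Type*} (A : V → V → Prop) (p : V → ι) : Prop :=
  ∀ u v : V, u ≠ v → p u = p v → CompAdj A u v

/-- A tournament: an orientation of a complete graph. -/
def IsTournament {V : Type*} (A : V → V → Prop) : Prop :=
  (∀ u, ¬ A u u) ∧ ∀ u v : V, u ≠ v → (A u v ∨ A v u) ∧ ¬ (A u v ∧ A v u)

/-- A star graph `K_{1,m}` (with center `c`) together with possibly some isolated
vertices. -/
def IsStarPlusIsolated {V : Type*} (G : SimpleGraph V) : Prop :=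
  ∃ c : V, (∃ x, G.Adj c x) ∧ ∀ x y : V, G.Adj x y → x = c ∨ y = c

/-- A double-star (a tree with exactly two vertices of degree at least two, namely the two
adjacent centers `c₁`, `c₂`) together with possibly some isolated vertices. -/
def IsDoubleStarPlusIsolated {V : Type*} (G : SimpleGraph V) : Prop :=
  ∃ c₁ c₂ : V, G.Adj c₁ c₂ ∧
    (∀ x y : V, G.Adj x y → x = c₁ ∨ y = c₁ ∨ x = c₂ ∨ y = c₂) ∧
    (∀ x : V, ¬ (G.Adj c₁ x ∧ G.Adj c₂ x)) ∧
    (∃ x, x ≠ c₂ ∧ G.Adj c₁ x) ∧ (∃ y, y ≠ c₁ ∧ G.Adj c₂ y)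

/-- A disjoint union of at least two star graphs (with centers the set `C`) together with
possibly some isolated vertices. -/
def IsDisjointStarsPlusIsolated {V : Type*} (G : SimpleGraph V) : Prop :=
  ∃ C : Finset V, 2 ≤ C.card ∧
    (∀ c ∈ C, ∃ x, G.Adj c x) ∧
    (∀ x y : V, G.Adj x y → (x ∈ C ∧ y ∉ C) ∨ (x ∉ C ∧ y ∈ C)) ∧
    (∀ x : V, ∀ c₁ ∈ C, ∀ c₂ ∈ C, G.Adj x c₁ → G.Adj x c₂ → c₁ = c₂)

/-- A caterpillar (a tree in which all vertices are within distance 1 of a central path,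
here the spine `q 0, q 1, …`) together with possibly some isolated vertices. -/
def IsCaterpillarPlusIsolated {V : Type*} (G : SimpleGraph V) : Prop :=
  ∃ (m : ℕ) (q : Fin m → V), Function.Injective q ∧
    (∀ i j : Fin m, G.Adj (q i) (q j) ↔ (i.val + 1 = j.val ∨ j.val + 1 = i.val)) ∧
    (∀ x y : V, G.Adj x y → (∃ i, q i = x) ∨ (∃ i, q i = y)) ∧
    (∀ x : V, (∀ i, q i ≠ x) → ∀ i j : Fin m, G.Adj x (q i) → G.Adj x (q j) → i = j)

/-!
Write `Ḡ` for the complement of `C_{1,2}(D)`. By tightness the ends of an edge of `Ḡ` lie in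
different partite sets, so every edge of `Ḡ` carries an arc; its ends have no common
out-neighbour and neither reaches an out-neighbour of the other by a 2-path avoiding it. Small
configurations of edges of `Ḡ` force two of their vertices into one partite set (an arc between
them would produce a competition), and the tightness witness for that pair then yields a
contradiction in every case. This shows that no vertex beats both of its neighbours on a path of
`Ḡ`, that a path `a - b - c` of `Ḡ` next to a disjoint edge of `Ḡ` is oriented `a → b ← c`, and
that opposite edges of a 4-cycle of `Ḡ` are not oriented the same way round the cycle. Hence
`Ḡ` contains no `C₄`, no `P₅` and no `P₄` plus a disjoint edge, while `Ḡ` is triangle-free by the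
maximality assumption. A triangle-free graph in which every edge meets the middle edge of every
`P₄` is a double star (if it contains a `P₄`) or a union of stars.
-/

namespace IsCompleteMultipartiteOrientation
variable {V ι : Type*} {A : V → V → Prop} {p : V → ι}

theorem not_arc_of_part_eq (hD : IsCompleteMultipartiteOrientation A p) {u v : V}
    (h : p u = p v) : ¬ A u v :=
  hD.1 u v h

theorem irrefl (hD : IsCompleteMultipartiteOrientation A p) (u : V) : ¬ A u u :=
  hD.not_arc_of_part_eq rfl

theorem asymm (hD : IsCompleteMultipartiteOrientation A p) {u v : V} (h : A u v) : ¬ A v u :=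
  fun h' => (hD.2 u v fun he => hD.not_arc_of_part_eq he h).2 ⟨h, h'⟩

theorem trichotomous (hD : IsCompleteMultipartiteOrientation A p) (u v : V) :
    A u v ∨ A v u ∨ p u = p v := by
  by_cases h : p u = p v
  · exact Or.inr (Or.inr h)
  · exact (hD.2 u v h).1.imp_right Or.inl

end IsCompleteMultipartiteOrientation

section NonCompeting
variable {V ι : Type*} {A : V → V → Prop} {p : V → ι}

local notation "Ḡ" => (compGraph A)ᶜ

theorem not_two_path_of_compl_adj (hD : IsCompleteMultipartiteOrientation A p) {u v w z : V}
    (h : Ḡ.Adj u v) (hz : z ≠ u) (hu : A u w) (hvz : A v z) : ¬ A z w := fun hzw =>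
  h.2 ⟨h.1, w, fun e => hD.irrefl u (e ▸ hu), fun e => hD.asymm hvz (e ▸ hzw),
    Or.inl ⟨hu, Or.inr ⟨z, hz, hvz, hzw⟩⟩⟩

theorem noncompeting_of_compl_adj (hD : IsCompleteMultipartiteOrientation A p)
    (ht : IsTight A p) {u v : V} (h : Ḡ.Adj u v) :
    p u ≠ p v ∧ (∀ w, A u w → ¬ A v w) ∧
      (∀ w z, z ≠ u → A u w → A v z → ¬ A z w) ∧ (∀ w z, z ≠ v → A v w → A u z → ¬ A z w) :=
  ⟨fun he => h.2 (ht u v h.1 he),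
    fun w hu hv => h.2 ⟨h.1, w, fun e => hD.irrefl u (e ▸ hu), fun e => hD.irrefl v (e ▸ hv),
      Or.inl ⟨hu, Or.inl hv⟩⟩,
    fun _ _ => not_two_path_of_compl_adj hD h, fun _ _ => not_two_path_of_compl_adj hD h.symm⟩

theorem arc_or_arc_of_compl_adj (hD : IsCompleteMultipartiteOrientation A p) (ht : IsTight A p)
    {u v : V} (h : Ḡ.Adj u v) : A u v ∨ A v u :=
  (hD.2 u v (noncompeting_of_compl_adj hD ht h).1).1

/- In the next three lemmas one pair of the configuration is forced into a partite set, and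
`grind` then splits over the arcs among the configuration and the tightness witness of that
pair. -/

theorem not_beats_both (hD : IsCompleteMultipartiteOrientation A p) (ht : IsTight A p)
    {a b c : V} (hab : Ḡ.Adj a b) (hbc : Ḡ.Adj b c) (hac : a ≠ c)
    (hAba : A b a) (hAbc : A b c) : False := by
  obtain ⟨-, _, _, _⟩ := noncompeting_of_compl_adj hD ht hab
  obtain ⟨-, _, _, _⟩ := noncompeting_of_compl_adj hD ht hbc
  have hpac : p a = p c := by grind [hD.trichotomous, hD.asymm, hD.not_arc_of_part_eq]
  obtain ⟨-, w, -, -, _⟩ := ht a c hac hpac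
  grind [hD.trichotomous, hD.asymm, hD.not_arc_of_part_eq]

theorem not_dirPath_of_compl_adj (hD : IsCompleteMultipartiteOrientation A p)
    (ht : IsTight A p) {a b c x y : V} (hab : Ḡ.Adj a b) (hbc : Ḡ.Adj b c) (hxy : Ḡ.Adj x y)
    (hac : a ≠ c) (hxa : x ≠ a) (hxb : x ≠ b) (hxc : x ≠ c) (hya : y ≠ a) (hyb : y ≠ b)
    (hyc : y ≠ c) (hAab : A a b) (hAbc : A b c) : False := by
  obtain ⟨-, _, _, _⟩ := noncompeting_of_compl_adj hD ht hab
  obtain ⟨-, _, _, _⟩ := noncompeting_of_compl_adj hD ht hbc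
  obtain ⟨-, _, _, _⟩ := noncompeting_of_compl_adj hD ht hxy
  have hpac : p a = p c := by grind [hD.trichotomous, hD.asymm, hD.not_arc_of_part_eq]
  obtain ⟨-, w, -, -, _⟩ := ht a c hac hpac
  grind [hD.trichotomous, hD.asymm, hD.not_arc_of_part_eq]

theorem not_codirected_of_compl_cycle4 (hD : IsCompleteMultipartiteOrientation A p)
    (ht : IsTight A p) {a b c d : V} (hab : Ḡ.Adj a b) (hbc : Ḡ.Adj b c) (hcd : Ḡ.Adj c d)
    (hda : Ḡ.Adj d a) (hbd : b ≠ d) (hAab : A a b) (hAcd : A c d) : False := by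
  obtain ⟨-, _, _, _⟩ := noncompeting_of_compl_adj hD ht hab
  obtain ⟨-, _, _, _⟩ := noncompeting_of_compl_adj hD ht hbc
  obtain ⟨-, _, _, _⟩ := noncompeting_of_compl_adj hD ht hcd
  obtain ⟨-, _, _, _⟩ := noncompeting_of_compl_adj hD ht hda
  have hpbd : p b = p d := by grind [hD.trichotomous, hD.asymm, hD.not_arc_of_part_eq]
  obtain ⟨-, w, -, -, _⟩ := ht b d hbd hpbd
  grind [hD.trichotomous, hD.asymm, hD.not_arc_of_part_eq]

theorem not_compl_cycle4 (hD : IsCompleteMultipartiteOrientation A p) (ht : IsTight A p)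
    {a b c d : V} (hab : Ḡ.Adj a b) (hbc : Ḡ.Adj b c) (hcd : Ḡ.Adj c d) (hda : Ḡ.Adj d a)
    (hac : a ≠ c) (hbd : b ≠ d) : False := by
  have k₁ := not_codirected_of_compl_cycle4 hD ht hab hbc hcd hda hbd
  have k₂ := not_codirected_of_compl_cycle4 hD ht hbc hcd hda hab hac.symm
  have k₃ := not_codirected_of_compl_cycle4 hD ht hab.symm hda.symm hcd.symm hbc.symm hac
  have k₄ := not_codirected_of_compl_cycle4 hD ht hda.symm hcd.symm hbc.symm hab.symm hbd.symm
  have s₁ := not_beats_both hD ht hab hbc hac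
  have s₂ := not_beats_both hD ht hbc hcd hbd
  have s₃ := not_beats_both hD ht hcd hda hac.symm
  have s₄ := not_beats_both hD ht hda hab hbd.symm
  rcases arc_or_arc_of_compl_adj hD ht hab with h₁ | h₁ <;>
    rcases arc_or_arc_of_compl_adj hD ht hbc with h₂ | h₂ <;>
    rcases arc_or_arc_of_compl_adj hD ht hcd with h₃ | h₃ <;>
    rcases arc_or_arc_of_compl_adj hD ht hda with h₄ | h₄ <;>
    first
    | exact k₁ ‹_› ‹_› | exact k₂ ‹_› ‹_› | exact k₃ ‹_› ‹_› | exact k₄ ‹_› ‹_›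
    | exact s₁ ‹_› ‹_› | exact s₂ ‹_› ‹_› | exact s₃ ‹_› ‹_› | exact s₄ ‹_› ‹_›

theorem arcs_toward_middle (hD : IsCompleteMultipartiteOrientation A p) (ht : IsTight A p)
    {a b c x y : V} (hab : Ḡ.Adj a b) (hbc : Ḡ.Adj b c) (hxy : Ḡ.Adj x y) (hac : a ≠ c)
    (hxa : x ≠ a) (hxb : x ≠ b) (hxc : x ≠ c) (hya : y ≠ a) (hyb : y ≠ b) (hyc : y ≠ c) :
    A a b ∧ A c b := by
  rcases arc_or_arc_of_compl_adj hD ht hab with h1 | h1 <;>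
    rcases arc_or_arc_of_compl_adj hD ht hbc with h2 | h2
  · exact (not_dirPath_of_compl_adj hD ht hab hbc hxy hac hxa hxb hxc hya hyb hyc h1 h2).elim
  · exact ⟨h1, h2⟩
  · exact (not_beats_both hD ht hab hbc hac h1 h2).elim
  · exact (not_dirPath_of_compl_adj hD ht hbc.symm hab.symm hxy hac.symm hxc hxb hxa hyc hyb hya
      h2 h1).elim

theorem not_compl_path5 (hD : IsCompleteMultipartiteOrientation A p) (ht : IsTight A p)
    {a b c d e : V} (hab : Ḡ.Adj a b) (hbc : Ḡ.Adj b c) (hcd : Ḡ.Adj c d) (hde : Ḡ.Adj d e)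
    (hac : a ≠ c) (had : a ≠ d) (hae : a ≠ e) (hbd : b ≠ d) (hbe : b ≠ e) (hce : c ≠ e) :
    False :=
  not_beats_both hD ht hbc hcd hbd
    (arcs_toward_middle hD ht hab hbc hde hac had.symm hbd.symm hcd.ne'
      hae.symm hbe.symm hce.symm).2
    (arcs_toward_middle hD ht hcd hde hab hce hac had hae hbc.ne hbd hbe).1

theorem compl_adj_meets_middle (hD : IsCompleteMultipartiteOrientation A p) (ht : IsTight A p)
    {a b c d x y : V} (hab : Ḡ.Adj a b) (hbc : Ḡ.Adj b c) (hcd : Ḡ.Adj c d)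
    (hac : a ≠ c) (had : a ≠ d) (hbd : b ≠ d) (hxy : Ḡ.Adj x y) :
    x = b ∨ x = c ∨ y = b ∨ y = c := by
  by_contra! ⟨hxb, hxc, hyb, hyc⟩
  rcases eq_or_ne x a with rfl | hxa
  · rcases eq_or_ne y d with rfl | hyd
    · exact not_compl_cycle4 hD ht hab hbc hcd hxy.symm hac hbd
    · exact not_compl_path5 hD ht hxy.symm hab hbc hcd hyb hyc hyd hac had hbd
  rcases eq_or_ne y a with rfl | hya
  · rcases eq_or_ne x d with rfl | hxd
    · exact not_compl_cycle4 hD ht hab hbc hcd hxy hac hbd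
    · exact not_compl_path5 hD ht hxy hab hbc hcd hxb hxc hxd hac had hbd
  rcases eq_or_ne x d with rfl | hxd
  · exact not_compl_path5 hD ht hab hbc hcd hxy hac had hya.symm hbd hyb.symm hyc.symm
  rcases eq_or_ne y d with rfl | hyd
  · exact not_compl_path5 hD ht hab hbc hcd hxy.symm hac had hxa.symm hbd hxb.symm hxc.symm
  exact hD.asymm (arcs_toward_middle hD ht hbc hcd hxy hbd hxb hxc hxd hyb hyc hyd).1
    (arcs_toward_middle hD ht hab hbc hxy hac hxa hxb hxc hya hyb hyc).2

end NonCompeting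

namespace SimpleGraph
variable {V : Type*} (G : SimpleGraph V)

theorem not_adj_of_cliqueFree_three (h3 : G.CliqueFree 3) {a b c : V}
    (hab : G.Adj a b) (hbc : G.Adj b c) : ¬ G.Adj a c := by
  classical
  exact fun hac => h3 _ (is3Clique_triple_iff.2 ⟨hab, hac, hbc⟩)

theorem leaf_of_adj_of_noP4 (h3 : G.CliqueFree 3)
    (hP4 : ∀ a b c d, G.Adj a b → G.Adj b c → G.Adj c d → a ≠ c → a ≠ d → b ≠ d → False)
    {x y : V} (hxy : G.Adj x y) : (∀ z, G.Adj x z → z = y) ∨ ∀ z, G.Adj y z → z = x := by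
  by_contra! ⟨⟨x', hxx', hx'y⟩, ⟨y', hyy', hy'x⟩⟩
  refine hP4 x' x y y' hxx'.symm hxy hyy' hx'y ?_ hy'x.symm
  rintro rfl
  exact G.not_adj_of_cliqueFree_three h3 hxx'.symm hxy hyy'.symm

theorem isDoubleStarPlusIsolated_of_path (h3 : G.CliqueFree 3) {a b c d : V}
    (hab : G.Adj a b) (hbc : G.Adj b c) (hcd : G.Adj c d) (hac : a ≠ c) (hbd : b ≠ d)
    (hmid : ∀ x y, G.Adj x y → x = b ∨ x = c ∨ y = b ∨ y = c) :
    IsDoubleStarPlusIsolated G :=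
  ⟨b, c, hbc, fun x y hxy => by grind, fun x ⟨hbx, hcx⟩ =>
    G.not_adj_of_cliqueFree_three h3 hbx hcx.symm hbc, ⟨a, hac, hab.symm⟩, ⟨d, hbd.symm, hcd⟩⟩

/-- The centres of a graph in which every edge has an end of degree one: the vertices carrying
a leaf, where of the two ends of an isolated edge only the smaller one counts. -/
def starCenters [LinearOrder V] : Set V :=
  {c | ∃ x, G.Adj c x ∧ (∀ y, G.Adj x y → y = c) ∧ ((∀ y, G.Adj c y → y = x) → c < x)}

section StarCenters
variable [LinearOrder V] {G}

theorem mem_starCenters_or_mem {x y : V} (hxy : G.Adj x y) (hy : ∀ z, G.Adj y z → z = x) :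
    x ∈ G.starCenters ∨ y ∈ G.starCenters := by
  by_cases hx : ∀ z, G.Adj x z → z = y
  · rcases hxy.ne.lt_or_gt with hlt | hlt
    · exact Or.inl ⟨y, hxy, hy, fun _ => hlt⟩
    · exact Or.inr ⟨x, hxy.symm, hx, fun _ => hlt⟩
  · exact Or.inl ⟨y, hxy, hy, fun h => absurd h hx⟩

theorem notMem_starCenters_of_mem {x y : V} (hxy : G.Adj x y) (hy : ∀ z, G.Adj y z → z = x)
    (hx : x ∈ G.starCenters) : y ∉ G.starCenters := by
  rintro ⟨y', hyy', hy', hylt⟩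
  obtain ⟨x', hxx', hx', hxlt⟩ := hx
  obtain rfl := hy y' hyy'
  obtain rfl := hy' x' hxx'
  exact lt_asymm (hxlt hy') (hylt hx')

variable (hleaf : ∀ x y, G.Adj x y → (∀ z, G.Adj x z → z = y) ∨ ∀ z, G.Adj y z → z = x)
include hleaf

theorem mem_starCenters_iff_notMem {x y : V} (hxy : G.Adj x y) :
    x ∈ G.starCenters ↔ y ∉ G.starCenters := by
  rcases hleaf x y hxy with h | h
  · have := mem_starCenters_or_mem hxy.symm h
    have := notMem_starCenters_of_mem hxy.symm h
    tauto
  · have := mem_starCenters_or_mem hxy h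
    have := notMem_starCenters_of_mem hxy h
    tauto

theorem eq_of_adj_starCenters {x c₁ c₂ : V} (hc₁ : c₁ ∈ G.starCenters) (hx₁ : G.Adj x c₁)
    (hx₂ : G.Adj x c₂) : c₁ = c₂ := by
  obtain ⟨x₁, hc₁x₁, hx₁leaf, -⟩ := hc₁
  rcases hleaf x c₁ hx₁ with h | h
  · exact (h c₁ hx₁).trans (h c₂ hx₂).symm
  · obtain rfl := h x₁ hc₁x₁
    exact (hx₁leaf c₂ hx₂).symm

theorem isStarPlusIsolated_or_isDisjointStarsPlusIsolated [Fintype V] {u v : V}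
    (huv : G.Adj u v) : IsStarPlusIsolated G ∨ IsDisjointStarsPlusIsolated G := by
  classical
  have mem_C {c : V} : c ∈ G.starCenters.toFinset ↔ c ∈ G.starCenters := Set.mem_toFinset
  by_cases hcard : 2 ≤ G.starCenters.toFinset.card
  · refine Or.inr ⟨_, hcard, fun c hc => ?_, fun x y hxy => ?_, fun x c₁ hc₁ c₂ _ =>
      eq_of_adj_starCenters hleaf (mem_C.1 hc₁)⟩
    · obtain ⟨x, hcx, -⟩ := mem_C.1 hc
      exact ⟨x, hcx⟩
    · have := mem_starCenters_iff_notMem hleaf hxy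
      simp only [mem_C]
      tauto
  · obtain ⟨c, hc⟩ : ∃ c, c ∈ G.starCenters := by
      by_cases hu : u ∈ G.starCenters
      · exact ⟨u, hu⟩
      · exact ⟨v, by simpa [mem_starCenters_iff_notMem hleaf huv] using hu⟩
    have hle := Finset.card_le_one.1 (by omega : G.starCenters.toFinset.card ≤ 1)
    refine Or.inl ⟨c, hc.imp fun x h => h.1, fun x y hxy => ?_⟩
    by_cases hx : x ∈ G.starCenters
    · exact Or.inl (hle x (mem_C.2 hx) c (mem_C.2 hc))
    · exact Or.inr (hle y (mem_C.2 (by simpa [mem_starCenters_iff_notMem hleaf hxy] using hx))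
        c (mem_C.2 hc))

end StarCenters

theorem isStar_or_isDoubleStar_or_isDisjointStars [Fintype V] (h3 : G.CliqueFree 3)
    {u v : V} (huv : G.Adj u v)
    (hmid : ∀ a b c d, G.Adj a b → G.Adj b c → G.Adj c d → a ≠ c → a ≠ d → b ≠ d →
      ∀ x y, G.Adj x y → x = b ∨ x = c ∨ y = b ∨ y = c) :
    IsStarPlusIsolated G ∨ IsDoubleStarPlusIsolated G ∨ IsDisjointStarsPlusIsolated G := by
  by_cases hP4 : ∃ a b c d, G.Adj a b ∧ G.Adj b c ∧ G.Adj c d ∧ a ≠ c ∧ a ≠ d ∧ b ≠ d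
  · obtain ⟨a, b, c, d, hab, hbc, hcd, hac, had, hbd⟩ := hP4
    exact Or.inr (Or.inl (G.isDoubleStarPlusIsolated_of_path h3 hab hbc hcd hac hbd
      (hmid a b c d hab hbc hcd hac had hbd)))
  · let _ : LinearOrder V := LinearOrder.lift' _ (Fintype.equivFin V).injective
    refine (isStarPlusIsolated_or_isDisjointStarsPlusIsolated (fun x y hxy => ?_) huv).imp_right
      Or.inr
    exact G.leaf_of_adj_of_noP4 h3
      (fun a b c d hab hbc hcd hac had hbd => hP4 ⟨a, b, c, d, hab, hbc, hcd, hac, had, hbd⟩) hxy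

end SimpleGraph

/-- Let `D` be a tight multipartite tournament whose maximum
anti-`{1,2}`-competing sets have size exactly two. Then the complement of `C_{1,2}(D)` is
(A) a star plus isolated vertices, (B) a double-star plus isolated vertices, (C) a
disjoint union of at least two stars plus isolated vertices, or (D) a caterpillar having
at least one vertex of degree 2, plus isolated vertices. -/
theorem stmt15 {V ι : Type*} [Fintype V] [Fintype ι]
    (A : V → V → Prop) (p : V → ι) (hD : IsMultipartiteTournament A p)
    (htight : IsTight A p)
    (hex : ∃ u v : V, u ≠ v ∧ ¬ (compGraph A).Adj u v)
    (hmax : ∀ S : Finset V, (∀ x ∈ S, ∀ y ∈ S, x ≠ y → ¬ (compGraph A).Adj x y) →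
      S.card ≤ 2) :
    IsStarPlusIsolated (compGraph A)ᶜ ∨
    IsDoubleStarPlusIsolated (compGraph A)ᶜ ∨
    IsDisjointStarsPlusIsolated (compGraph A)ᶜ ∨
    (IsCaterpillarPlusIsolated (compGraph A)ᶜ ∧
      ∃ x : V, (((compGraph A)ᶜ).neighborSet x).ncard = 2) := by
  obtain ⟨-, -, hD⟩ := hD
  obtain ⟨u, v, huv, hnadj⟩ := hex
  have h3 : (compGraph A)ᶜ.CliqueFree 3 := fun t ht => by
    have := hmax t fun x hx y hy hxy => (ht.isClique hx hy hxy).2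
    rw [ht.card_eq] at this
    omega
  refine ((compGraph A)ᶜ.isStar_or_isDoubleStar_or_isDisjointStars h3
    (((compGraph A).compl_adj u v).2 ⟨huv, hnadj⟩) ?_).imp_right (Or.imp_right Or.inl)
  exact fun a b c d hab hbc hcd hac had hbd x y hxy =>
    compl_adj_meets_middle hD htight hab hbc hcd hac had hbd hxy
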